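/- arXiv:2604.00309 — 2 statements merged into one kernel-verified Lean document; each statement's English description precedes it below -/
import Mathlib

section
/- Let n, p ≥ 1, let P ∈ ℝ^{n×n} be positive semidefinite, let A ∈ ℝ^{n×n}, let C ∈ ℝ^{p×n} with induced 2-norm ‖C‖ ≤ c̄, let Q ∈ ℝ^{n×n} be positive definite with Q ⪰ q·Iₙ for some q ∈ (0,∞), and let R ∈ ℝ^{p×p} be positive definite with R ⪰ r·I_p for some r ∈ (0,∞). Define the prior covariance P⁺ = A P Aᵀ + Q and the updated covariance P' = P⁺ − P⁺ Cᵀ (C P⁺ Cᵀ + R)⁻¹ C P⁺. Then P' is positive definite and P' ⪰ (q⁻¹ + c̄²·r⁻¹)⁻¹ · Iₙ. -/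
/-!
By the Woodbury identity the updated covariance is `P' = (P⁺⁻¹ + Cᵀ R⁻¹ C)⁻¹`, the inverse of a
positive definite matrix. Inversion is antitone in the Loewner order, so `P⁺ ⪰ Q ⪰ q I` and
`R ⪰ r I` give `P⁺⁻¹ ⪯ q⁻¹ I` and `Cᵀ R⁻¹ C ⪯ r⁻¹ CᵀC ⪯ c̄² r⁻¹ I`; inverting the sum once more
yields `P' ⪰ (q⁻¹ + c̄² r⁻¹)⁻¹ I`.
-/

open Matrix
open scoped MatrixOrder ComplexOrder

namespace Matrix

section LoewnerOrder

variable {m n 𝕜 : Type*} [Fintype n] [RCLike 𝕜]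

theorem conjTranspose_mul_mul_le_conjTranspose_mul_mul [Fintype m] {A B : Matrix n n 𝕜}
    (h : A ≤ B) (C : Matrix n m 𝕜) : Cᴴ * A * C ≤ Cᴴ * B * C := by
  simpa [le_iff, Matrix.mul_sub, Matrix.sub_mul] using
    (le_iff.mp h).conjTranspose_mul_mul_same C

variable [DecidableEq n]

/-- The block matrix `[V 1; 1 W⁻¹]` has Schur complements `V - W` (of `W⁻¹`) and `W⁻¹ - V⁻¹`
(of `V`), so one is positive semidefinite iff the other is. -/
theorem PosDef.inv_le_inv_of_le {W V : Matrix n n 𝕜} (hW : W.PosDef) (h : W ≤ V) :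
    V⁻¹ ≤ W⁻¹ := by
  have hV : V.PosDef := by simpa using hW.add_posSemidef (le_iff.mp h)
  let := hV.isUnit.invertible
  let := hW.inv.isUnit.invertible
  have hblock : (fromBlocks V 1 1ᴴ W⁻¹).PosSemidef := by
    rw [PosDef.fromBlocks₂₂ _ _ hW.inv]
    simpa [nonsing_inv_nonsing_inv _ ((isUnit_iff_isUnit_det _).mp hW.isUnit)] using le_iff.mp h
  rw [PosDef.fromBlocks₁₁ _ _ hV] at hblock
  simpa using le_iff.mpr hblock

theorem inv_smul_one {s : ℝ} (hs : s ≠ 0) : (s • (1 : Matrix n n 𝕜))⁻¹ = s⁻¹ • 1 :=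
  inv_eq_left_inv <| by simp [smul_smul, hs]

theorem inv_le_smul_one_of_smul_one_le {W : Matrix n n 𝕜} {s : ℝ} (hs : 0 < s)
    (h : s • 1 ≤ W) : W⁻¹ ≤ s⁻¹ • 1 := by
  simpa [inv_smul_one hs.ne'] using (PosDef.one.smul hs).inv_le_inv_of_le h

theorem smul_one_le_inv_of_le_smul_one {W : Matrix n n 𝕜} (hW : W.PosDef) {s : ℝ} (hs : 0 < s)
    (h : W ≤ s • 1) : s⁻¹ • 1 ≤ W⁻¹ := by
  simpa [inv_smul_one hs.ne'] using hW.inv_le_inv_of_le h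

end LoewnerOrder

section Real

variable {n p : Type*} [Fintype n] [Fintype p] [DecidableEq n]

theorem transpose_mul_self_le_smul_one {C : Matrix p n ℝ} {c : ℝ}
    (h : ∀ x, (C *ᵥ x) ⬝ᵥ (C *ᵥ x) ≤ c * (x ⬝ᵥ x)) : Cᵀ * C ≤ c • 1 := by
  refine le_iff.mpr (.of_dotProduct_mulVec_nonneg ?_ fun x => ?_)
  · exact (isHermitian_one.smul (.all c)).sub (by simpa using isHermitian_conjTranspose_mul_self C)
  · have hquad : star x ⬝ᵥ ((c • 1 - Cᵀ * C) *ᵥ x) = c * (x ⬝ᵥ x) - (C *ᵥ x) ⬝ᵥ (C *ᵥ x) := by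
      simp [sub_mulVec, smul_mulVec, ← mulVec_mulVec, dotProduct_mulVec _ Cᵀ, vecMul_transpose]
    rw [hquad]
    linarith [h x]

theorem transpose_mul_inv_mul_le_smul_one [DecidableEq p] {R : Matrix p p ℝ} {C : Matrix p n ℝ}
    {r c : ℝ} (hr : 0 < r) (hR : r • 1 ≤ R) (hC : Cᵀ * C ≤ c • 1) :
    Cᵀ * R⁻¹ * C ≤ (c * r⁻¹) • 1 :=
  calc Cᵀ * R⁻¹ * C ≤ r⁻¹ • (Cᵀ * C) := by
        simpa using conjTranspose_mul_mul_le_conjTranspose_mul_mul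
          (inv_le_smul_one_of_smul_one_le hr hR) C
    _ ≤ r⁻¹ • (c • 1) := smul_le_smul_of_nonneg_left hC (by positivity)
    _ = (c * r⁻¹) • 1 := by rw [smul_smul, mul_comm]

end Real

section Riccati

variable {n p α : Type*} [Fintype n] [DecidableEq n] [Fintype p] [DecidableEq p] [CommRing α]

noncomputable def riccatiUpdate (X : Matrix n n α) (C : Matrix p n α) (R : Matrix p p α) :
    Matrix n n α :=
  X - X * Cᵀ * (C * X * Cᵀ + R)⁻¹ * C * X

/-- Information form of the measurement update (Woodbury identity). -/
theorem riccatiUpdate_eq_inv {X : Matrix n n α} {C : Matrix p n α} {R : Matrix p p α}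
    (hX : IsUnit X) (hR : IsUnit R) (hS : IsUnit (C * X * Cᵀ + R)) :
    riccatiUpdate X C R = (X⁻¹ + Cᵀ * R⁻¹ * C)⁻¹ := by
  have hXX := nonsing_inv_nonsing_inv X ((isUnit_iff_isUnit_det _).mp hX)
  have hRR := nonsing_inv_nonsing_inv R ((isUnit_iff_isUnit_det _).mp hR)
  rw [add_mul_mul_inv_eq_sub _ _ _ _ (isUnit_nonsing_inv_iff.mpr hX)
    (isUnit_nonsing_inv_iff.mpr hR) (by rwa [hXX, hRR, add_comm]), hXX, hRR, add_comm R]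
  rfl

end Riccati

end Matrix

theorem riccati_step_lower_bound_general
    (n p : ℕ)
    (P : Matrix (Fin n) (Fin n) ℝ) (hP : P.PosSemidef)
    (A : Matrix (Fin n) (Fin n) ℝ)
    (C : Matrix (Fin p) (Fin n) ℝ) (cbar : ℝ)
    (hC : ∀ x : Fin n → ℝ, Real.sqrt ((C *ᵥ x) ⬝ᵥ (C *ᵥ x)) ≤ cbar * Real.sqrt (x ⬝ᵥ x))
    (Q : Matrix (Fin n) (Fin n) ℝ) (q : ℝ) (hq : 0 < q)
    (hQ : Q.PosDef) (hQlo : (Q - q • (1 : Matrix (Fin n) (Fin n) ℝ)).PosSemidef)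
    (R : Matrix (Fin p) (Fin p) ℝ) (r : ℝ) (hr : 0 < r)
    (hR : R.PosDef) (hRlo : (R - r • (1 : Matrix (Fin p) (Fin p) ℝ)).PosSemidef) :
    ((A * P * Aᵀ + Q) -
        (A * P * Aᵀ + Q) * Cᵀ * (C * (A * P * Aᵀ + Q) * Cᵀ + R)⁻¹ * C *
          (A * P * Aᵀ + Q)).PosDef ∧
    ((((A * P * Aᵀ + Q) -
        (A * P * Aᵀ + Q) * Cᵀ * (C * (A * P * Aᵀ + Q) * Cᵀ + R)⁻¹ * C *
          (A * P * Aᵀ + Q))) -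
        (q⁻¹ + cbar ^ 2 * r⁻¹)⁻¹ • (1 : Matrix (Fin n) (Fin n) ℝ)).PosSemidef := by
  set X := A * P * Aᵀ + Q with hXdef
  have hAPA : (A * P * Aᵀ).PosSemidef := by simpa using hP.mul_mul_conjTranspose_same A
  have hX : X.PosDef := PosDef.posSemidef_add hAPA hQ
  have hXq : q • 1 ≤ X := by simpa [le_iff, hXdef, add_sub_assoc] using hAPA.add hQlo
  have hCC : Cᵀ * C ≤ cbar ^ 2 • 1 := transpose_mul_self_le_smul_one fun x => by
    have := pow_le_pow_left₀ (Real.sqrt_nonneg _) (hC x) 2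
    rwa [mul_pow, Real.sq_sqrt (by simpa using dotProduct_star_self_nonneg (C *ᵥ x)),
      Real.sq_sqrt (by simpa using dotProduct_star_self_nonneg x)] at this
  have hS : (C * X * Cᵀ + R).PosDef := by
    simpa using PosDef.posSemidef_add (hX.posSemidef.mul_mul_conjTranspose_same C) hR
  have hK : (X⁻¹ + Cᵀ * R⁻¹ * C).PosDef := by
    simpa using hX.inv.add_posSemidef (hR.inv.posSemidef.conjTranspose_mul_mul_same C)
  have hKle : X⁻¹ + Cᵀ * R⁻¹ * C ≤ (q⁻¹ + cbar ^ 2 * r⁻¹) • 1 := by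
    rw [add_smul]
    exact add_le_add (inv_le_smul_one_of_smul_one_le hq hXq)
      (transpose_mul_inv_mul_le_smul_one hr hRlo hCC)
  have hupd : X - X * Cᵀ * (C * X * Cᵀ + R)⁻¹ * C * X = (X⁻¹ + Cᵀ * R⁻¹ * C)⁻¹ :=
    riccatiUpdate_eq_inv hX.isUnit hR.isUnit hS.isUnit
  rw [hupd]
  exact ⟨hK.inv, smul_one_le_inv_of_le_smul_one hK (by positivity) hKle⟩

/-- One full step of the discrete-time Riccati recursion (prediction `P⁺ = A P Aᵀ + Q`
followed by measurement update) produces a positive definite covariance bounded below by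
`(q⁻¹ + c̄²·r⁻¹)⁻¹ · Iₙ`, where `Q ⪰ q·Iₙ`, `R ⪰ r·I_p`, and the induced 2-norm of `C`
is at most `c̄`. -/
theorem riccati_step_lower_bound
    (n p : ℕ) (hn : 1 ≤ n) (hp : 1 ≤ p)
    (P : Matrix (Fin n) (Fin n) ℝ) (hP : P.PosSemidef)
    (A : Matrix (Fin n) (Fin n) ℝ)
    (C : Matrix (Fin p) (Fin n) ℝ) (cbar : ℝ)
    (hC : ∀ x : Fin n → ℝ, Real.sqrt ((C *ᵥ x) ⬝ᵥ (C *ᵥ x)) ≤ cbar * Real.sqrt (x ⬝ᵥ x))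
    (Q : Matrix (Fin n) (Fin n) ℝ) (q : ℝ) (hq : 0 < q)
    (hQ : Q.PosDef) (hQlo : (Q - q • (1 : Matrix (Fin n) (Fin n) ℝ)).PosSemidef)
    (R : Matrix (Fin p) (Fin p) ℝ) (r : ℝ) (hr : 0 < r)
    (hR : R.PosDef) (hRlo : (R - r • (1 : Matrix (Fin p) (Fin p) ℝ)).PosSemidef) :
    ((A * P * Aᵀ + Q) -
        (A * P * Aᵀ + Q) * Cᵀ * (C * (A * P * Aᵀ + Q) * Cᵀ + R)⁻¹ * C *
          (A * P * Aᵀ + Q)).PosDef ∧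
    ((((A * P * Aᵀ + Q) -
        (A * P * Aᵀ + Q) * Cᵀ * (C * (A * P * Aᵀ + Q) * Cᵀ + R)⁻¹ * C *
          (A * P * Aᵀ + Q))) -
        (q⁻¹ + cbar ^ 2 * r⁻¹)⁻¹ • (1 : Matrix (Fin n) (Fin n) ℝ)).PosSemidef :=
  riccati_step_lower_bound_general n p P hP A C cbar hC Q q hq hQ hQlo R r hr hR hRlo
end

section
/- Let n, p ≥ 1, let J be a finite index set with |J| = ℓ, let e ∈ ℝⁿ, and for each j ∈ J let M_j ∈ ℝ^{p×n}, b_j ∈ ℝᵖ, and W_j ∈ ℝ^{p×p} positive definite. Suppose there exist J̄, E ∈ [0,∞) and α ∈ (0,∞) such that Σ_{j∈J} (M_j e + b_j)ᵀ W_j (M_j e + b_j) ≤ J̄, Σ_{j∈J} b_jᵀ W_j b_j ≤ E, and Σ_{j∈J} M_jᵀ W_j M_j ⪰ α·Iₙ. Then ‖e‖ ≤ √(2(J̄ + E)/α). -/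
/-!
Observability turns the Gramian bound into `α ‖e‖² ≤ ∑ⱼ (Mⱼ e)ᵀ Wⱼ (Mⱼ e)`. Writing
`Mⱼ e = (Mⱼ e + bⱼ) - bⱼ`, each summand is at most `2 (Mⱼ e + bⱼ)ᵀ Wⱼ (Mⱼ e + bⱼ) + 2 bⱼᵀ Wⱼ bⱼ`,
and summing gives `α ‖e‖² ≤ 2 (J̄ + E)`.
-/

open Matrix

namespace Matrix

variable {m n ι R : Type*} [Fintype m] [Fintype n] [Fintype ι]

theorem dotProduct_sum_transpose_mul_mul_mulVec [CommSemiring R]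
    (M : ι → Matrix m n R) (W : ι → Matrix m m R) (x : n → R) :
    x ⬝ᵥ (∑ j, (M j)ᵀ * W j * M j) *ᵥ x = ∑ j, (M j *ᵥ x) ⬝ᵥ W j *ᵥ (M j *ᵥ x) := by
  simp only [sum_mulVec, dotProduct_sum, ← mulVec_mulVec, dotProduct_mulVec, vecMul_transpose]

variable [CommRing R] [PartialOrder R] [IsOrderedRing R] [StarRing R] [TrivialStar R]

theorem PosSemidef.dotProduct_mulVec_le_two_mul_add {W : Matrix m m R} (hW : W.PosSemidef)
    (u b : m → R) :
    u ⬝ᵥ W *ᵥ u ≤ 2 * ((u + b) ⬝ᵥ W *ᵥ (u + b)) + 2 * (b ⬝ᵥ W *ᵥ b) := by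
  have hnonneg := hW.dotProduct_mulVec_nonneg (u + (2 : R) • b)
  have hexpand : 2 * ((u + b) ⬝ᵥ W *ᵥ (u + b)) + 2 * (b ⬝ᵥ W *ᵥ b) - u ⬝ᵥ W *ᵥ u
      = star (u + (2 : R) • b) ⬝ᵥ W *ᵥ (u + (2 : R) • b) := by
    simp only [star_trivial, mulVec_add, mulVec_smul, dotProduct_add, add_dotProduct,
      dotProduct_smul, smul_dotProduct, smul_eq_mul]
    ring
  exact sub_nonneg.mp (hexpand ▸ hnonneg)

theorem PosSemidef.smul_dotProduct_self_le [DecidableEq n] {G : Matrix n n R} {α : R}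
    (hG : (G - α • (1 : Matrix n n R)).PosSemidef) (x : n → R) :
    α * (x ⬝ᵥ x) ≤ x ⬝ᵥ G *ᵥ x := by
  have hnonneg := hG.dotProduct_mulVec_nonneg x
  rw [star_trivial, sub_mulVec, dotProduct_sub, smul_mulVec, one_mulVec, dotProduct_smul,
    smul_eq_mul] at hnonneg
  exact sub_nonneg.mp hnonneg

end Matrix

theorem gramian_error_bound_general
    (n p : ℕ)
    (ι : Type) [Fintype ι]
    (e : Fin n → ℝ) (M : ι → Matrix (Fin p) (Fin n) ℝ) (b : ι → Fin p → ℝ)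
    (W : ι → Matrix (Fin p) (Fin p) ℝ) (hW : ∀ j, (W j).PosDef)
    (Jbar E α : ℝ) (hα : 0 < α)
    (h1 : ∑ j, (M j *ᵥ e + b j) ⬝ᵥ W j *ᵥ (M j *ᵥ e + b j) ≤ Jbar)
    (h2 : ∑ j, b j ⬝ᵥ W j *ᵥ b j ≤ E)
    (h3 : ((∑ j, (M j)ᵀ * W j * M j) - α • (1 : Matrix (Fin n) (Fin n) ℝ)).PosSemidef) :
    Real.sqrt (e ⬝ᵥ e) ≤ Real.sqrt (2 * (Jbar + E) / α) := by
  have hobs := h3.smul_dotProduct_self_le e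
  rw [dotProduct_sum_transpose_mul_mul_mulVec] at hobs
  have hsplit : ∑ j, (M j *ᵥ e) ⬝ᵥ W j *ᵥ (M j *ᵥ e)
      ≤ 2 * ∑ j, (M j *ᵥ e + b j) ⬝ᵥ W j *ᵥ (M j *ᵥ e + b j)
        + 2 * ∑ j, b j ⬝ᵥ W j *ᵥ b j := by
    rw [Finset.mul_sum, Finset.mul_sum, ← Finset.sum_add_distrib]
    exact Finset.sum_le_sum fun j _ ↦
      (hW j).posSemidef.dotProduct_mulVec_le_two_mul_add (M j *ᵥ e) (b j)
  refine Real.sqrt_le_sqrt ((le_div_iff₀ hα).mpr ?_)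
  linarith

/-- Observability-based error bound: if the weighted residual sum is at most `J̄`, the
weighted offset sum is at most `E`, and the Gramian `Σ_j M_jᵀ W_j M_j ⪰ α·Iₙ`, then
`‖e‖ ≤ √(2(J̄+E)/α)`. -/
theorem gramian_error_bound
    (n p ℓ : ℕ) (hn : 1 ≤ n) (hp : 1 ≤ p)
    (ι : Type) [Fintype ι] (hcard : Fintype.card ι = ℓ)
    (e : Fin n → ℝ) (M : ι → Matrix (Fin p) (Fin n) ℝ) (b : ι → Fin p → ℝ)
    (W : ι → Matrix (Fin p) (Fin p) ℝ) (hW : ∀ j, (W j).PosDef)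
    (Jbar E α : ℝ) (hJbar : 0 ≤ Jbar) (hE : 0 ≤ E) (hα : 0 < α)
    (h1 : ∑ j, (M j *ᵥ e + b j) ⬝ᵥ W j *ᵥ (M j *ᵥ e + b j) ≤ Jbar)
    (h2 : ∑ j, b j ⬝ᵥ W j *ᵥ b j ≤ E)
    (h3 : ((∑ j, (M j)ᵀ * W j * M j) - α • (1 : Matrix (Fin n) (Fin n) ℝ)).PosSemidef) :
    Real.sqrt (e ⬝ᵥ e) ≤ Real.sqrt (2 * (Jbar + E) / α) :=
  gramian_error_bound_general n p ι e M b W hW Jbar E α hα h1 h2 h3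
end
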